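/- arXiv:2404.07041 — 3 statements merged into one kernel-verified Lean document; each statement's English description precedes it below -/
import Mathlib

section
/- Let T > 0, let K : ℝ × ℝ → ℝ be continuous, let a : ℝ → ℝ be continuous with a(0) ≠ 0, let α be a constant with 0 < α < 1, let ε ∈ (0,1), let l : ℝ → ℝ be continuous with |a(t) − a(0)| ≤ l(t)·|t|^ε for all t ∈ [−T, T], and let 0 < q < 1 satisfy |a(t)|·α^ε ≤ q·|a(0)| for all t ∈ [−T, T]. Then for every natural number n, the number λ_n = a(0)·α^n is an eigenvalue of the integral-functional operator A: that is, there exists a continuous function x : [−T, T] → ℝ, not identically zero, such that a(0)·α^n · x(t) = ∫_0^t K(t,s)·x(s) ds + a(t)·x(α·t) for all t ∈ [−T, T]. -/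
/-!
Put `λ = a(0) αⁿ` and look for the eigenfunction as a fixed point of `Φ x = (A x) / λ` near `tⁿ`.
Measure functions on `[-T, T]` against the weight `w(t) = |t|^(n+ε) e^(γ|t|)`. The functional
part of `Φ` contracts such bounds by `q`, because `|a(t)| α^(n+ε) ≤ q |λ|`; the exponential factor
makes the Volterra part gain a factor `M / γ`, which is small for large `γ`. So `|v| ≤ B w` gives
`|Φ v| ≤ θ B w` with `θ < 1`, and the Hölder condition on `a` gives `|Φ tⁿ - tⁿ| ≤ C w`. The Picard
iterates of `tⁿ` then converge uniformly to a fixed point `x` with `|x(t) - tⁿ| = O(|t|^(n+ε))`,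
so `x` does not vanish near `0`.
-/

open Set Filter Topology Real intervalIntegral

lemma abs_integral_le_of_abs_le_mul_exp_of_nonneg {g : ℝ → ℝ} {D γ t : ℝ} (hγ : 0 < γ)
    (ht : 0 ≤ t) (hgD : ∀ s ∈ uIcc 0 t, |g s| ≤ D * exp (γ * |s|)) :
    |∫ s in 0..t, g s| ≤ D * exp (γ * t) / γ := by
  have hD : 0 ≤ D := by simpa using (abs_nonneg _).trans (hgD 0 left_mem_uIcc)
  calc |∫ s in 0..t, g s| ≤ ∫ s in 0..t, D * exp (γ * s) := by
        refine norm_integral_le_of_norm_le (f := g) ht (.of_forall fun s hs => ?_)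
          ((by fun_prop : Continuous fun s => D * exp (γ * s)).intervalIntegrable
            (μ := MeasureTheory.volume) 0 t)
        simpa [abs_of_nonneg hs.1.le] using
          hgD s (uIoc_subset_uIcc (by simpa [uIoc_of_le ht]))
    _ = D * (exp (γ * t) - 1) / γ := by
        rw [integral_const_mul, integral_comp_mul_left (fun s => exp s) hγ.ne', integral_exp,
          mul_zero, exp_zero, smul_eq_mul]
        field_simp
    _ ≤ D * exp (γ * t) / γ := by gcongr; linarith

lemma abs_integral_le_of_abs_le_mul_exp {g : ℝ → ℝ} {D γ t : ℝ} (hγ : 0 < γ)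
    (hgD : ∀ s ∈ uIcc 0 t, |g s| ≤ D * exp (γ * |s|)) :
    |∫ s in 0..t, g s| ≤ D * exp (γ * |t|) / γ := by
  rcases le_total 0 t with ht | ht
  · simpa [abs_of_nonneg ht] using abs_integral_le_of_abs_le_mul_exp_of_nonneg hγ ht hgD
  · have hneg := abs_integral_le_of_abs_le_mul_exp_of_nonneg (g := fun s => g (-s)) hγ
      (neg_nonneg.2 ht) fun s hs => by
        refine abs_neg s ▸ hgD (-s) ?_
        rw [mem_uIcc] at hs ⊢
        rcases hs with h | h
        · exact .inr ⟨by linarith, by linarith⟩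
        · exact .inl ⟨by linarith, by linarith⟩
    rwa [integral_comp_neg, neg_zero, neg_neg, integral_symm, abs_neg, ← abs_of_nonpos ht]
      at hneg

lemma exists_pos_div_lt (M : ℝ) {c : ℝ} (hc : 0 < c) : ∃ γ > 0, M / γ < c := by
  obtain ⟨γ, hγM, hγ⟩ := (((tendsto_const_nhds (x := M)).div_atTop tendsto_id).eventually
    (gt_mem_nhds hc)).and (eventually_gt_atTop 0) |>.exists
  exact ⟨γ, hγ, hγM⟩

section WeightedContraction

variable {X : Type*} {S : Set X} {w : X → ℝ} {C θ : ℝ}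

lemma exists_tendstoUniformlyOn_of_abs_sub_le_geometric {F : ℕ → X → ℝ} (hθ₀ : 0 ≤ θ)
    (hθ₁ : θ < 1) (hC : 0 ≤ C) (hw : BddAbove (w '' S))
    (hF : ∀ k, ∀ t ∈ S, |F (k + 1) t - F k t| ≤ C * θ ^ k * w t) :
    ∃ x, TendstoUniformlyOn F x atTop S ∧
      ∀ m, ∀ t ∈ S, |x t - F m t| ≤ C * θ ^ m / (1 - θ) * w t := by
  have hlim : ∀ t ∈ S, ∃ y, Tendsto (fun k => F k t) atTop (𝓝 y) := fun t ht =>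
    cauchySeq_tendsto_of_complete <| cauchySeq_of_le_geometric θ (C * w t) hθ₁ fun k => by
      rw [Real.dist_eq, abs_sub_comm]; linarith [hF k t ht]
  choose! x hx using hlim
  have hxF : ∀ m, ∀ t ∈ S, |x t - F m t| ≤ C * θ ^ m / (1 - θ) * w t := fun m t ht => by
    rw [abs_sub_comm, ← Real.dist_eq]
    convert dist_le_of_le_geometric_of_tendsto θ (C * w t) hθ₁ (fun k => by
      rw [Real.dist_eq, abs_sub_comm]; linarith [hF k t ht]) (hx t ht) m using 1
    ring
  refine ⟨x, Metric.tendstoUniformlyOn_iff.2 fun δ hδ => ?_, hxF⟩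
  obtain ⟨W, hW⟩ := hw
  have hθ : 0 < 1 - θ := by linarith
  have hbound : Tendsto (fun m => C * θ ^ m / (1 - θ) * W) atTop (𝓝 0) := by
    simpa using (((tendsto_pow_atTop_nhds_zero_of_lt_one hθ₀ hθ₁).const_mul C).div_const
      (1 - θ)).mul_const W
  filter_upwards [hbound.eventually (gt_mem_nhds hδ)] with m hm t ht
  rw [Real.dist_eq]
  calc |x t - F m t| ≤ C * θ ^ m / (1 - θ) * w t := hxF m t ht
    _ ≤ C * θ ^ m / (1 - θ) * W := by gcongr; exact hW ⟨t, ht, rfl⟩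
    _ < δ := hm

variable [TopologicalSpace X]

structure WeightedContractionOn (Φ : (X → ℝ) → X → ℝ) (S : Set X) (w : X → ℝ) (θ : ℝ) :
    Prop where
  continuousOn : ∀ v, ContinuousOn v S → ContinuousOn (Φ v) S
  map_sub : ∀ v₁ v₂, ContinuousOn v₁ S → ContinuousOn v₂ S →
    ∀ t ∈ S, Φ (v₁ - v₂) t = Φ v₁ t - Φ v₂ t
  abs_le : ∀ v B, 0 ≤ B → (∀ t ∈ S, |v t| ≤ B * w t) → ∀ t ∈ S, |Φ v t| ≤ θ * B * w t

theorem WeightedContractionOn.exists_fixedPoint {Φ : (X → ℝ) → X → ℝ}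
    (hΦ : WeightedContractionOn Φ S w θ) (hθ₀ : 0 ≤ θ) (hθ₁ : θ < 1) (hC : 0 ≤ C)
    (hw : BddAbove (w '' S)) {x₀ : X → ℝ} (hx₀ : ContinuousOn x₀ S)
    (hx₀C : ∀ t ∈ S, |Φ x₀ t - x₀ t| ≤ C * w t) :
    ∃ x, ContinuousOn x S ∧ (∀ t ∈ S, Φ x t = x t) ∧
      ∀ t ∈ S, |x t - x₀ t| ≤ C / (1 - θ) * w t := by
  have hθ : 0 < 1 - θ := by linarith
  set F : ℕ → X → ℝ := fun k => Φ^[k] x₀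
  have hF_succ (k : ℕ) : F (k + 1) = Φ (F k) := Function.iterate_succ_apply' Φ k x₀
  have hFc (k : ℕ) : ContinuousOn (F k) S := by
    induction k with
    | zero => exact hx₀
    | succ k ih => rw [hF_succ]; exact hΦ.continuousOn _ ih
  have hstep (k : ℕ) : ∀ t ∈ S, |F (k + 1) t - F k t| ≤ C * θ ^ k * w t := by
    induction k with
    | zero => simpa [F] using hx₀C
    | succ k ih =>
      intro t ht
      calc |F (k + 2) t - F (k + 1) t| = |Φ (F (k + 1) - F k) t| := by
            rw [hΦ.map_sub _ _ (hFc _) (hFc _) t ht, ← hF_succ, ← hF_succ]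
        _ ≤ θ * (C * θ ^ k) * w t :=
            hΦ.abs_le _ _ (by positivity) ih t ht
        _ = C * θ ^ (k + 1) * w t := by ring
  obtain ⟨x, hFx, hxF⟩ := exists_tendstoUniformlyOn_of_abs_sub_le_geometric hθ₀ hθ₁ hC hw hstep
  have hxc : ContinuousOn x S := hFx.continuousOn (.of_forall hFc)
  refine ⟨x, hxc, fun t ht => ?_, by simpa [F] using hxF 0⟩
  -- `Φ x - F (m + 1) = Φ (x - F m)` is controlled by the contraction estimate
  have hΦx : Tendsto (fun m => F (m + 1) t) atTop (𝓝 (Φ x t)) := by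
    rw [tendsto_iff_norm_sub_tendsto_zero]
    refine squeeze_zero (fun _ => norm_nonneg _) (fun m => ?_) (by
      simpa using ((((tendsto_pow_atTop_nhds_zero_of_lt_one hθ₀ hθ₁).const_mul C).div_const
        (1 - θ)).const_mul θ).mul_const (w t))
    rw [Real.norm_eq_abs, abs_sub_comm, hF_succ, ← hΦ.map_sub _ _ hxc (hFc m) t ht]
    exact hΦ.abs_le _ _ (by positivity) (hxF m) t ht
  exact tendsto_nhds_unique hΦx ((hFx.tendsto_at ht).comp (tendsto_add_atTop_nat 1))

end WeightedContraction

noncomputable def integralFunctionalOp (K : ℝ × ℝ → ℝ) (a : ℝ → ℝ) (α : ℝ) (x : ℝ → ℝ)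
    (t : ℝ) : ℝ :=
  (∫ s in (0 : ℝ)..t, K (t, s) * x s) + a t * x (α * t)

noncomputable def expWeight (β γ t : ℝ) : ℝ := |t| ^ β * exp (γ * |t|)

section expWeight

variable {β γ : ℝ}

lemma expWeight_nonneg (t : ℝ) : 0 ≤ expWeight β γ t := by
  unfold expWeight; positivity

lemma rpow_abs_le_expWeight (hγ : 0 ≤ γ) (t : ℝ) : |t| ^ β ≤ expWeight β γ t :=
  le_mul_of_one_le_right (by positivity) (one_le_exp (by positivity))

lemma expWeight_le_of_abs_le (hβ : 0 ≤ β) (hγ : 0 ≤ γ) {s t : ℝ} (h : |s| ≤ |t|) :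
    expWeight β γ s ≤ expWeight β γ t := by
  unfold expWeight; gcongr

lemma expWeight_mul_le (hγ : 0 ≤ γ) {α : ℝ} (hα₀ : 0 ≤ α) (hα₁ : α ≤ 1) (t : ℝ) :
    expWeight β γ (α * t) ≤ α ^ β * expWeight β γ t := by
  unfold expWeight
  rw [abs_mul, abs_of_nonneg hα₀, mul_rpow hα₀ (abs_nonneg t), mul_assoc]
  gcongr
  exact mul_le_of_le_one_left (abs_nonneg t) hα₁

lemma bddAbove_expWeight_image_Icc (hβ : 0 ≤ β) (hγ : 0 ≤ γ) (T : ℝ) :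
    BddAbove (expWeight β γ '' Icc (-T) T) := by
  refine ⟨expWeight β γ T, ?_⟩
  rintro _ ⟨t, ht, rfl⟩
  exact expWeight_le_of_abs_le hβ hγ ((abs_le.2 ht).trans (le_abs_self T))

end expWeight

section integralFunctionalOp

variable {T : ℝ} {K : ℝ × ℝ → ℝ} {a : ℝ → ℝ} {α : ℝ}

lemma uIcc_zero_subset_Icc_neg {t : ℝ} (ht : t ∈ Icc (-T) T) : uIcc 0 t ⊆ Icc (-T) T :=
  uIcc_subset_Icc ⟨by linarith [ht.1, ht.2], by linarith [ht.1, ht.2]⟩ ht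

lemma mul_mem_Icc_neg (hα₀ : 0 ≤ α) (hα₁ : α ≤ 1) {t : ℝ} (ht : t ∈ Icc (-T) T) :
    α * t ∈ Icc (-T) T :=
  ⟨by nlinarith [ht.1, ht.2], by nlinarith [ht.1, ht.2]⟩

lemma continuous_integralFunctionalOp (hK : Continuous K) (ha : Continuous a) {v : ℝ → ℝ}
    (hv : Continuous v) : Continuous (integralFunctionalOp K a α v) := by
  unfold integralFunctionalOp; fun_prop

lemma integralFunctionalOp_congr (hα₀ : 0 ≤ α) (hα₁ : α ≤ 1) {v w : ℝ → ℝ}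
    (h : EqOn v w (Icc (-T) T)) :
    EqOn (integralFunctionalOp K a α v) (integralFunctionalOp K a α w) (Icc (-T) T) := by
  intro t ht
  unfold integralFunctionalOp
  rw [integral_congr (g := fun s => K (t, s) * w s)
    fun s hs => by simp only [h (uIcc_zero_subset_Icc_neg ht hs)],
    h (mul_mem_Icc_neg hα₀ hα₁ ht)]

lemma continuousOn_integralFunctionalOp (hK : Continuous K) (ha : Continuous a) (hα₀ : 0 ≤ α)
    (hα₁ : α ≤ 1) {v : ℝ → ℝ} (hv : ContinuousOn v (Icc (-T) T)) :
    ContinuousOn (integralFunctionalOp K a α v) (Icc (-T) T) := by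
  rcases lt_or_ge T (-T) with hT | hT
  · simp [Icc_eq_empty_of_lt hT]
  -- the operator only sees `v` on `[-T, T]`, so `v` may be replaced by a continuous extension
  set v' : ℝ → ℝ := fun s => v (max (-T) (min T s))
  have hv' : Continuous v' := hv.comp_continuous (by fun_prop)
    fun s => ⟨le_max_left _ _, max_le hT (min_le_left _ _)⟩
  refine (continuous_integralFunctionalOp hK ha hv').continuousOn.congr
    (integralFunctionalOp_congr hα₀ hα₁ fun s hs => ?_).symm
  simp [v', hs.1, hs.2]

lemma integralFunctionalOp_sub (hK : Continuous K) {v w : ℝ → ℝ}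
    (hv : ContinuousOn v (Icc (-T) T)) (hw : ContinuousOn w (Icc (-T) T)) {t : ℝ}
    (ht : t ∈ Icc (-T) T) :
    integralFunctionalOp K a α (v - w) t =
      integralFunctionalOp K a α v t - integralFunctionalOp K a α w t := by
  have hKt : ContinuousOn (fun s => K (t, s)) (uIcc 0 t) := by fun_prop
  have hsub := uIcc_zero_subset_Icc_neg ht
  unfold integralFunctionalOp
  simp only [Pi.sub_apply, mul_sub]
  rw [integral_sub (ContinuousOn.intervalIntegrable (u := fun s => K (t, s) * v s)
    (hKt.mul (hv.mono hsub))) (ContinuousOn.intervalIntegrable (u := fun s => K (t, s) * w s)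
    (hKt.mul (hw.mono hsub)))]
  ring

lemma abs_integralFunctionalOp_le {M Q B β γ : ℝ} (hα₀ : 0 ≤ α) (hα₁ : α ≤ 1) (hβ : 0 ≤ β)
    (hγ : 0 < γ) (hKM : ∀ t ∈ Icc (-T) T, ∀ s ∈ Icc (-T) T, |K (t, s)| ≤ M)
    (haQ : ∀ t ∈ Icc (-T) T, |a t| * α ^ β ≤ Q) (hB : 0 ≤ B) {v : ℝ → ℝ}
    (hv : ∀ t ∈ Icc (-T) T, |v t| ≤ B * expWeight β γ t) {t : ℝ} (ht : t ∈ Icc (-T) T) :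
    |integralFunctionalOp K a α v t| ≤ (M / γ + Q) * B * expWeight β γ t := by
  have hM : 0 ≤ M := (abs_nonneg _).trans (hKM t ht t ht)
  have hint : |∫ s in (0 : ℝ)..t, K (t, s) * v s| ≤ M * B * |t| ^ β * exp (γ * |t|) / γ := by
    refine abs_integral_le_of_abs_le_mul_exp hγ fun s hs => ?_
    have hsS := uIcc_zero_subset_Icc_neg ht hs
    have hst : |s| ≤ |t| := by simpa using abs_sub_left_of_mem_uIcc hs
    calc |K (t, s) * v s| = |K (t, s)| * |v s| := abs_mul _ _
      _ ≤ M * (B * expWeight β γ s) := by gcongr; exacts [hKM t ht s hsS, hv s hsS]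
      _ ≤ M * (B * (|t| ^ β * exp (γ * |s|))) := by unfold expWeight; gcongr
      _ = M * B * |t| ^ β * exp (γ * |s|) := by ring
  have hfun : |a t * v (α * t)| ≤ Q * B * expWeight β γ t :=
    calc |a t * v (α * t)| = |a t| * |v (α * t)| := abs_mul _ _
      _ ≤ |a t| * (B * (α ^ β * expWeight β γ t)) := by
          gcongr
          exact (hv _ (mul_mem_Icc_neg hα₀ hα₁ ht)).trans
            (by gcongr; exact expWeight_mul_le hγ.le hα₀ hα₁ t)
      _ = (|a t| * α ^ β) * (B * expWeight β γ t) := by ring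
      _ ≤ Q * (B * expWeight β γ t) := by
          gcongr
          · exact mul_nonneg hB (expWeight_nonneg t)
          · exact haQ t ht
      _ = Q * B * expWeight β γ t := by ring
  calc |integralFunctionalOp K a α v t|
      ≤ |∫ s in (0 : ℝ)..t, K (t, s) * v s| + |a t * v (α * t)| := abs_add_le _ _
    _ ≤ M * B * |t| ^ β * exp (γ * |t|) / γ + Q * B * expWeight β γ t := add_le_add hint hfun
    _ = (M / γ + Q) * B * expWeight β γ t := by unfold expWeight; ring

lemma abs_integralFunctionalOp_pow_sub_le {M L ε : ℝ} (n : ℕ) (hε₀ : 0 ≤ ε) (hε₁ : ε ≤ 1)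
    (hKM : ∀ t ∈ Icc (-T) T, ∀ s ∈ Icc (-T) T, |K (t, s)| ≤ M)
    (haL : ∀ t ∈ Icc (-T) T, |a t - a 0| ≤ L * |t| ^ ε) {t : ℝ} (ht : t ∈ Icc (-T) T) :
    |integralFunctionalOp K a α (· ^ n) t - a 0 * α ^ n * t ^ n|
      ≤ (M * T ^ (1 - ε) + L * |α| ^ n) * |t| ^ ((n : ℝ) + ε) := by
  have hM : 0 ≤ M := (abs_nonneg _).trans (hKM t ht t ht)
  have htT : |t| ≤ T := abs_le.2 ht
  have hint : |∫ s in (0 : ℝ)..t, K (t, s) * s ^ n| ≤ M * |t| ^ n * |t| := by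
    simpa using norm_integral_le_of_norm_le_const (a := 0) (b := t) (C := M * |t| ^ n)
      (f := fun s => K (t, s) * s ^ n)
      fun s hs => by
        have hs' := uIoc_subset_uIcc hs
        have hst : |s| ≤ |t| := by simpa using abs_sub_left_of_mem_uIcc hs'
        rw [Real.norm_eq_abs, abs_mul, abs_pow]
        exact mul_le_mul (hKM t ht s (uIcc_zero_subset_Icc_neg ht hs'))
          (pow_le_pow_left₀ (abs_nonneg s) hst n) (by positivity) hM
  have hfun : |(a t - a 0) * (α * t) ^ n| ≤ L * |α| ^ n * (|t| ^ n * |t| ^ ε) := by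
    rw [abs_mul, abs_pow, abs_mul, mul_pow]
    calc |a t - a 0| * (|α| ^ n * |t| ^ n) ≤ L * |t| ^ ε * (|α| ^ n * |t| ^ n) := by
          gcongr; exact haL t ht
      _ = L * |α| ^ n * (|t| ^ n * |t| ^ ε) := by ring
  have hlin : |t| ≤ T ^ (1 - ε) * |t| ^ ε :=
    calc |t| = |t| ^ (1 - ε) * |t| ^ ε := by
          rw [← rpow_add_of_nonneg (abs_nonneg t) (by linarith) hε₀, sub_add_cancel, rpow_one]
      _ ≤ T ^ (1 - ε) * |t| ^ ε := by gcongr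
  calc |integralFunctionalOp K a α (· ^ n) t - a 0 * α ^ n * t ^ n|
      = |(∫ s in (0 : ℝ)..t, K (t, s) * s ^ n) + (a t - a 0) * (α * t) ^ n| := by
        unfold integralFunctionalOp; ring_nf
    _ ≤ M * |t| ^ n * |t| + L * |α| ^ n * (|t| ^ n * |t| ^ ε) :=
        (abs_add_le _ _).trans (add_le_add hint hfun)
    _ ≤ M * |t| ^ n * (T ^ (1 - ε) * |t| ^ ε) + L * |α| ^ n * (|t| ^ n * |t| ^ ε) := by
        gcongr
    _ = (M * T ^ (1 - ε) + L * |α| ^ n) * |t| ^ ((n : ℝ) + ε) := by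
        rw [rpow_add_of_nonneg (abs_nonneg t) n.cast_nonneg hε₀, rpow_natCast]; ring

lemma abs_integralFunctionalOp_pow_div_sub_le {M L ε γ : ℝ} (n : ℕ) (hε₀ : 0 ≤ ε)
    (hε₁ : ε ≤ 1) (hγ : 0 ≤ γ) (hL : 0 ≤ L) (hlam : a 0 * α ^ n ≠ 0)
    (hKM : ∀ t ∈ Icc (-T) T, ∀ s ∈ Icc (-T) T, |K (t, s)| ≤ M)
    (haL : ∀ t ∈ Icc (-T) T, |a t - a 0| ≤ L * |t| ^ ε) {t : ℝ} (ht : t ∈ Icc (-T) T) :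
    |integralFunctionalOp K a α (· ^ n) t / (a 0 * α ^ n) - t ^ n|
      ≤ (M * T ^ (1 - ε) + L * |α| ^ n) / |a 0 * α ^ n| * expWeight (n + ε) γ t := by
  have hM : 0 ≤ M := (abs_nonneg _).trans (hKM t ht t ht)
  have hT : 0 ≤ T := by linarith [ht.1, ht.2]
  calc |integralFunctionalOp K a α (· ^ n) t / (a 0 * α ^ n) - t ^ n|
      = |integralFunctionalOp K a α (· ^ n) t - a 0 * α ^ n * t ^ n| / |a 0 * α ^ n| := by
        rw [← abs_div, sub_div, mul_div_cancel_left₀ _ hlam]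
    _ ≤ (M * T ^ (1 - ε) + L * |α| ^ n) * |t| ^ ((n : ℝ) + ε) / |a 0 * α ^ n| := by
        gcongr; exact abs_integralFunctionalOp_pow_sub_le n hε₀ hε₁ hKM haL ht
    _ ≤ (M * T ^ (1 - ε) + L * |α| ^ n) / |a 0 * α ^ n| * expWeight (n + ε) γ t := by
        rw [mul_div_right_comm]
        exact mul_le_mul_of_nonneg_left (rpow_abs_le_expWeight hγ t) (by positivity)

lemma weightedContractionOn_integralFunctionalOp_div {lam M Q β γ : ℝ} (hK : Continuous K)
    (ha : Continuous a) (hα₀ : 0 ≤ α) (hα₁ : α ≤ 1) (hβ : 0 ≤ β) (hγ : 0 < γ)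
    (hKM : ∀ t ∈ Icc (-T) T, ∀ s ∈ Icc (-T) T, |K (t, s)| ≤ M)
    (haQ : ∀ t ∈ Icc (-T) T, |a t| * α ^ β ≤ Q) :
    WeightedContractionOn (fun v t => integralFunctionalOp K a α v t / lam) (Icc (-T) T)
      (expWeight β γ) ((M / γ + Q) / |lam|) where
  continuousOn _ hv := (continuousOn_integralFunctionalOp hK ha hα₀ hα₁ hv).div_const lam
  map_sub _ _ hv₁ hv₂ _ ht := by
    simp only [integralFunctionalOp_sub hK hv₁ hv₂ ht, sub_div]
  abs_le _ _ hB hv _ ht := by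
    rw [abs_div, div_mul_eq_mul_div, div_mul_eq_mul_div]
    exact div_le_div_of_nonneg_right
      (abs_integralFunctionalOp_le hα₀ hα₁ hβ hγ hKM haQ hB hv ht) (abs_nonneg lam)

end integralFunctionalOp

lemma exists_ne_zero_of_abs_sub_pow_le_expWeight {x : ℝ → ℝ} {T ε C γ : ℝ} {n : ℕ}
    (hT : 0 < T) (hε : 0 < ε)
    (hx : ∀ t ∈ Icc (-T) T, |x t - t ^ n| ≤ C * expWeight (n + ε) γ t) :
    ∃ t ∈ Icc (-T) T, x t ≠ 0 := by
  have hlim : Tendsto (fun t : ℝ => C * (t ^ ε * exp (γ * t))) (𝓝[>] 0) (𝓝 0) := by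
    have : ContinuousAt (fun t : ℝ => C * (t ^ ε * exp (γ * t))) 0 :=
      continuousAt_const.mul ((continuousAt_rpow_const 0 ε (.inr hε.le)).mul (by fun_prop))
    simpa [zero_rpow hε.ne'] using this.tendsto.mono_left nhdsWithin_le_nhds
  obtain ⟨t, hsmall, ht₀, htT⟩ := ((hlim.eventually (gt_mem_nhds one_pos)).and
    (Ioc_mem_nhdsGT hT)).exists
  refine ⟨t, ⟨by linarith, htT⟩, fun hxt => ?_⟩
  have htn : 0 < t ^ n := pow_pos ht₀ n
  have := hx t ⟨by linarith, htT⟩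
  rw [hxt, zero_sub, abs_neg, abs_of_pos htn, expWeight, abs_of_pos ht₀,
    rpow_add ht₀, rpow_natCast] at this
  nlinarith

/-- Eigenvalues of the integral-functional Volterra operator
`(A x)(t) = ∫_0^t K(t,s) x(s) ds + a(t) x(α t)` on `C[-T,T]`:
under the stated conditions, `λ_n = a(0) α^n` is an eigenvalue for every `n`. -/
theorem eigenvalues_of_integral_functional_operator
    (T : ℝ) (hT : 0 < T)
    (K : ℝ × ℝ → ℝ) (hK : Continuous K)
    (a : ℝ → ℝ) (ha : Continuous a) (ha0 : a 0 ≠ 0)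
    (α : ℝ) (hα0 : 0 < α) (hα1 : α < 1)
    (ε : ℝ) (hε : ε ∈ Set.Ioo (0 : ℝ) 1)
    (l : ℝ → ℝ) (hl : Continuous l)
    (hal : ∀ t ∈ Set.Icc (-T) T, |a t - a 0| ≤ l t * |t| ^ ε)
    (q : ℝ) (hq0 : 0 < q) (hq1 : q < 1)
    (haq : ∀ t ∈ Set.Icc (-T) T, |a t| * α ^ ε ≤ q * |a 0|) :
    ∀ n : ℕ, ∃ x : ℝ → ℝ,
      ContinuousOn x (Set.Icc (-T) T) ∧
      (∃ t ∈ Set.Icc (-T) T, x t ≠ 0) ∧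
      ∀ t ∈ Set.Icc (-T) T,
        a 0 * α ^ n * x t = (∫ s in (0 : ℝ)..t, K (t, s) * x s) + a t * x (α * t) := by
  intro n
  obtain ⟨hε₀, hε₁⟩ := hε
  set lam := a 0 * α ^ n
  have hlam : lam ≠ 0 := mul_ne_zero ha0 (pow_pos hα0 n).ne'
  have h0 : (0 : ℝ) ∈ Icc (-T) T := ⟨by linarith, hT.le⟩
  obtain ⟨M, hM⟩ := (isCompact_Icc.prod isCompact_Icc).exists_bound_of_continuousOn
    (hK.continuousOn (s := Icc (-T) T ×ˢ Icc (-T) T))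
  obtain ⟨L, hL⟩ := isCompact_Icc.exists_bound_of_continuousOn (hl.continuousOn (s := Icc (-T) T))
  have hKM : ∀ t ∈ Icc (-T) T, ∀ s ∈ Icc (-T) T, |K (t, s)| ≤ M := fun t ht s hs => hM _ ⟨ht, hs⟩
  have hM0 : 0 ≤ M := (abs_nonneg _).trans (hKM 0 h0 0 h0)
  have hL0 : 0 ≤ L := (norm_nonneg _).trans (hL 0 h0)
  have haL : ∀ t ∈ Icc (-T) T, |a t - a 0| ≤ L * |t| ^ ε := fun t ht =>
    (hal t ht).trans (by gcongr; exact (le_abs_self _).trans (hL t ht))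
  have haQ : ∀ t ∈ Icc (-T) T, |a t| * α ^ ((n : ℝ) + ε) ≤ q * |lam| := fun t ht => by
    rw [rpow_add hα0, rpow_natCast, abs_mul, abs_of_pos (pow_pos hα0 n)]
    nlinarith [haq t ht, pow_pos hα0 n]
  -- a large exponential rate `γ` makes the Volterra part of the operator small
  obtain ⟨γ, hγ, hγM⟩ := exists_pos_div_lt M (mul_pos (sub_pos.2 hq1) (abs_pos.2 hlam))
  have hθ₁ : (M / γ + q * |lam|) / |lam| < 1 := by
    rw [div_lt_one (abs_pos.2 hlam)]
    linarith
  obtain ⟨x, hxc, hfix, hxw⟩ := (weightedContractionOn_integralFunctionalOp_div (lam := lam) hK ha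
    hα0.le hα1.le (by positivity) hγ hKM haQ).exists_fixedPoint (by positivity) hθ₁
    (by positivity : 0 ≤ (M * T ^ (1 - ε) + L * |α| ^ n) / |lam|)
    (bddAbove_expWeight_image_Icc (by positivity) hγ.le T)
    (continuous_pow n).continuousOn
    fun t ht => abs_integralFunctionalOp_pow_div_sub_le n hε₀.le hε₁.le hγ.le hL0 hlam hKM haL ht
  refine ⟨x, hxc, exists_ne_zero_of_abs_sub_pow_le_expWeight hT hε₀ hxw, fun t ht => ?_⟩
  rw [← hfix t ht, mul_div_cancel₀ _ hlam]
  rfl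
end

section
/- Let T > 0, let K : ℝ × ℝ → ℝ be continuous, let a : ℝ → ℝ be continuous with a(0) ≠ 0, let 0 < α < 1, let n be a natural number, let ε ∈ (0,1), and let 0 < q < 1 satisfy |a(t)|·α^ε ≤ q·|a(0)| for all t ∈ [0, T]. Define the weighted norm ‖v‖_L = max_{t ∈ [0,T]} e^(−L·t)·|v(t)| on the space of continuous functions v : [0, T] → ℝ, for L > 0. Define the linear operator B by (B v)(t) = (a(t)/a(0))·α^ε·v(α·t) + (1/(a(0)·α^n)) · ∫_0^t K(t,s)·(s/t)^(n+ε)·v(s) ds for t ∈ (0, T], with (B v)(0) = (a(0)/a(0))·α^ε·v(0). Then there exists L* > 0 such that for every L ≥ L* and every continuous v : [0, T] → ℝ, one has ‖B v‖_L ≤ q·‖v‖_L. -/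
open MeasureTheory Real

/-- The linear operator
`(B v)(t) = (a(t)/a(0)) α^ε v(α t) + (1/(a(0) α^n)) ∫_0^t K(t,s) (s/t)^(n+ε) v(s) ds`
for `t ∈ (0,T]`, with `(B v)(0) = (a(0)/a(0)) α^ε v(0)`. -/
noncomputable def Bop (K : ℝ × ℝ → ℝ) (a : ℝ → ℝ) (α : ℝ) (n : ℕ) (ε : ℝ)
    (v : ℝ → ℝ) : ℝ → ℝ := fun t =>
  if t = 0 then (a 0 / a 0) * α ^ ε * v 0
  else (a t / a 0) * α ^ ε * v (α * t) +
    (1 / (a 0 * α ^ n)) * ∫ s in (0 : ℝ)..t, K (t, s) * (s / t) ^ ((n : ℝ) + ε) * v s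

/-- The weighted norm `‖v‖_L = max_{t ∈ [0,T]} e^(-L t) |v(t)|` on `C[0,T]`. -/
noncomputable def weightedNorm (T L : ℝ) (v : ℝ → ℝ) : ℝ :=
  ⨆ t : Set.Icc (0 : ℝ) T, Real.exp (-L * t) * |v t|

/-! Evaluating `v` at `αt` gains a decaying factor in the weight,
`e^{-Lt} |v(αt)| ≤ e^{-(1-α)Lt} ‖v‖_L`, while the Volterra term contributes at most `C (1 - e^{-Lt}) / L · ‖v‖_L` with `C = max |K| / (|a 0| α^n)`.
Convexity of `exp` gives `e^{-(1-α)x} ≤ (1-α) e^{-x} + α`, so as soon as `C / L ≤ q (1-α)` the two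
contributions add up to at most `q ‖v‖_L`. -/

theorem exp_neg_one_sub_mul_le {α : ℝ} (hα0 : 0 ≤ α) (hα1 : α ≤ 1) (x : ℝ) :
    exp (-((1 - α) * x)) ≤ (1 - α) * exp (-x) + α := by
  simpa [smul_eq_mul, mul_neg] using
    convexOn_exp.2 (Set.mem_univ (-x)) (Set.mem_univ 0) (sub_nonneg.2 hα1) hα0 (by ring)

theorem mul_exp_neg_add_mul_one_sub_exp_neg_le {α q c x : ℝ} (hα0 : 0 ≤ α) (hα1 : α ≤ 1)
    (hq : 0 ≤ q) (hc : c ≤ q * (1 - α)) (hx : 0 ≤ x) :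
    q * exp (-((1 - α) * x)) + c * (1 - exp (-x)) ≤ q := by
  have hconv := exp_neg_one_sub_mul_le hα0 hα1 x
  have hexp : 0 ≤ 1 - exp (-x) := sub_nonneg.2 (exp_le_one_iff.2 (neg_nonpos.2 hx))
  calc q * exp (-((1 - α) * x)) + c * (1 - exp (-x))
      ≤ q * ((1 - α) * exp (-x) + α) + q * (1 - α) * (1 - exp (-x)) := by
        gcongr
    _ = q := by ring

theorem integral_exp_mul {L : ℝ} (hL : L ≠ 0) (a b : ℝ) :
    ∫ s in a..b, exp (L * s) = (exp (L * b) - exp (L * a)) / L := by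
  rw [intervalIntegral.integral_comp_mul_left (fun s => exp s) hL, integral_exp, smul_eq_mul,
    inv_mul_eq_div]

theorem exp_neg_mul_abs_integral_le {f : ℝ → ℝ} {A L t : ℝ} (hL : L ≠ 0) (ht : 0 ≤ t)
    (hf : ∀ s ∈ Set.Ioc 0 t, |f s| ≤ A * exp (L * s)) :
    exp (-L * t) * |∫ s in (0 : ℝ)..t, f s| ≤ A * (1 - exp (-L * t)) / L := by
  have hint : |∫ s in (0 : ℝ)..t, f s| ≤ ∫ s in (0 : ℝ)..t, A * exp (L * s) :=
    intervalIntegral.norm_integral_le_of_norm_le ht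
      (.of_forall fun s hs => (norm_eq_abs _).trans_le (hf s hs))
      ((by fun_prop : Continuous fun s => A * exp (L * s)).intervalIntegrable _ _)
  rw [intervalIntegral.integral_const_mul, integral_exp_mul hL, mul_zero, exp_zero] at hint
  calc exp (-L * t) * |∫ s in (0 : ℝ)..t, f s|
      ≤ exp (-L * t) * (A * ((exp (L * t) - 1) / L)) := by gcongr
    _ = A * (exp (-L * t) * exp (L * t) - exp (-L * t)) / L := by ring
    _ = A * (1 - exp (-L * t)) / L := by rw [← exp_add, neg_mul, neg_add_cancel, exp_zero]

section weightedNorm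

variable {T L : ℝ} {v : ℝ → ℝ}

theorem weightedNorm_nonneg : 0 ≤ weightedNorm T L v :=
  Real.iSup_nonneg fun _ => by positivity

theorem weightedNorm_le {c : ℝ} (h : ∀ t ∈ Set.Icc 0 T, exp (-L * t) * |v t| ≤ c)
    (hc : 0 ≤ c) : weightedNorm T L v ≤ c :=
  Real.iSup_le (fun t => h t t.2) hc

theorem exp_neg_mul_abs_le_weightedNorm (hv : ContinuousOn v (Set.Icc 0 T)) {t : ℝ}
    (ht : t ∈ Set.Icc 0 T) : exp (-L * t) * |v t| ≤ weightedNorm T L v := by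
  have hcont : Continuous fun t : Set.Icc (0 : ℝ) T => exp (-L * t) * |v t| :=
    (by fun_prop : Continuous fun t : Set.Icc (0 : ℝ) T => exp (-L * t)).mul hv.domRestrict.abs
  exact le_ciSup (isCompact_range hcont).bddAbove ⟨t, ht⟩

theorem abs_le_exp_mul_weightedNorm (hv : ContinuousOn v (Set.Icc 0 T)) {t : ℝ}
    (ht : t ∈ Set.Icc 0 T) : |v t| ≤ exp (L * t) * weightedNorm T L v := by
  calc |v t| = exp (L * t) * (exp (-L * t) * |v t|) := by
        rw [← mul_assoc, ← exp_add, neg_mul, add_neg_cancel, exp_zero, one_mul]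
    _ ≤ exp (L * t) * weightedNorm T L v := by
        gcongr; exact exp_neg_mul_abs_le_weightedNorm hv ht

end weightedNorm

-- At `t = 0` the integral over `[0, 0]` vanishes, so the case split in `Bop` is only cosmetic.
theorem Bop_apply (K : ℝ × ℝ → ℝ) (a : ℝ → ℝ) (α : ℝ) (n : ℕ) (ε : ℝ) (v : ℝ → ℝ) (t : ℝ) :
    Bop K a α n ε v t = a t / a 0 * α ^ ε * v (α * t) +
      1 / (a 0 * α ^ n) * ∫ s in (0 : ℝ)..t, K (t, s) * (s / t) ^ ((n : ℝ) + ε) * v s := by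
  unfold Bop
  split_ifs with ht
  · simp [ht]
  · rfl

section Bop

variable {K : ℝ × ℝ → ℝ} {a : ℝ → ℝ} {α ε : ℝ} {n : ℕ} {v : ℝ → ℝ} {T L M q t : ℝ}

theorem exp_neg_mul_abs_shift_term_le (hα0 : 0 ≤ α) (hα1 : α ≤ 1) (hq : 0 ≤ q)
    (haq : |a t| * α ^ ε ≤ q * |a 0|) (hv : ContinuousOn v (Set.Icc 0 T))
    (ht : t ∈ Set.Icc 0 T) :
    exp (-L * t) * |a t / a 0 * α ^ ε * v (α * t)| ≤
      q * exp (-((1 - α) * (L * t))) * weightedNorm T L v := by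
  have hαt : α * t ∈ Set.Icc 0 T :=
    ⟨mul_nonneg hα0 ht.1, (mul_le_of_le_one_left ht.1 hα1).trans ht.2⟩
  have hcoef : |a t / a 0 * α ^ ε| ≤ q := by
    rw [abs_mul, abs_div, abs_of_nonneg (rpow_nonneg hα0 ε), div_mul_eq_mul_div]
    exact div_le_of_le_mul₀ (abs_nonneg _) hq haq
  calc exp (-L * t) * |a t / a 0 * α ^ ε * v (α * t)|
      = |a t / a 0 * α ^ ε| * exp (-((1 - α) * (L * t))) *
          (exp (-L * (α * t)) * |v (α * t)|) := by
        rw [abs_mul, show -L * t = -((1 - α) * (L * t)) + -L * (α * t) by ring, exp_add]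
        ring
    _ ≤ q * exp (-((1 - α) * (L * t))) * weightedNorm T L v := by
        gcongr
        exact exp_neg_mul_abs_le_weightedNorm hv hαt

theorem exp_neg_mul_abs_integral_term_le {p : ℝ}
    (hM : ∀ x ∈ Set.Icc 0 T ×ˢ Set.Icc 0 T, |K x| ≤ M) (hp : 0 ≤ p)
    (hv : ContinuousOn v (Set.Icc 0 T)) (hL : L ≠ 0) (ht : t ∈ Set.Icc 0 T) :
    exp (-L * t) * |∫ s in (0 : ℝ)..t, K (t, s) * (s / t) ^ p * v s| ≤
      M * weightedNorm T L v * (1 - exp (-L * t)) / L := by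
  refine exp_neg_mul_abs_integral_le hL ht.1 fun s hs => ?_
  have hsT : s ∈ Set.Icc 0 T := ⟨hs.1.le, hs.2.trans ht.2⟩
  have hK : |K (t, s)| ≤ M := hM _ ⟨ht, hsT⟩
  have hratio : 0 ≤ s / t := div_nonneg hs.1.le ht.1
  have hpow : (s / t) ^ p ≤ 1 := rpow_le_one hratio (div_le_one_of_le₀ hs.2 ht.1) hp
  calc |K (t, s) * (s / t) ^ p * v s| = |K (t, s)| * (s / t) ^ p * |v s| := by
        rw [abs_mul, abs_mul, abs_of_nonneg (rpow_nonneg hratio p)]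
    _ ≤ M * 1 * (exp (L * s) * weightedNorm T L v) := by
        have hM0 : 0 ≤ M := (abs_nonneg _).trans hK
        gcongr
        exact abs_le_exp_mul_weightedNorm hv hsT
    _ = M * weightedNorm T L v * exp (L * s) := by ring

theorem exp_neg_mul_abs_Bop_le (hM : ∀ x ∈ Set.Icc 0 T ×ˢ Set.Icc 0 T, |K x| ≤ M)
    (hα0 : 0 ≤ α) (hα1 : α ≤ 1) (hε : 0 ≤ ε) (hq : 0 ≤ q)
    (haq : ∀ t ∈ Set.Icc 0 T, |a t| * α ^ ε ≤ q * |a 0|) (hL : 0 < L)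
    (hLM : M / (|a 0| * α ^ n) ≤ L * (q * (1 - α))) (hv : ContinuousOn v (Set.Icc 0 T))
    (ht : t ∈ Set.Icc 0 T) :
    exp (-L * t) * |Bop K a α n ε v t| ≤ q * weightedNorm T L v := by
  set N := weightedNorm T L v
  set c := M / (|a 0| * α ^ n) / L
  have hshift := exp_neg_mul_abs_shift_term_le (L := L) hα0 hα1 hq (haq t ht) hv ht
  have hintegral := exp_neg_mul_abs_integral_term_le hM (by positivity : 0 ≤ (n : ℝ) + ε) hv
    hL.ne' ht
  have hscalar : q * exp (-((1 - α) * (L * t))) + c * (1 - exp (-L * t)) ≤ q := by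
    rw [neg_mul]
    exact mul_exp_neg_add_mul_one_sub_exp_neg_le hα0 hα1 hq
      ((div_le_iff₀ hL).2 (by linarith)) (mul_nonneg hL.le ht.1)
  have hcoef : |1 / (a 0 * α ^ n)| = 1 / (|a 0| * α ^ n) := by
    rw [abs_div, abs_one, abs_mul, abs_of_nonneg (pow_nonneg hα0 n)]
  rw [Bop_apply]
  calc exp (-L * t) * |a t / a 0 * α ^ ε * v (α * t) +
        1 / (a 0 * α ^ n) * ∫ s in (0 : ℝ)..t, K (t, s) * (s / t) ^ ((n : ℝ) + ε) * v s|
      ≤ exp (-L * t) * |a t / a 0 * α ^ ε * v (α * t)| + |1 / (a 0 * α ^ n)| *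
          (exp (-L * t) * |∫ s in (0 : ℝ)..t, K (t, s) * (s / t) ^ ((n : ℝ) + ε) * v s|) := by
        rw [mul_left_comm, ← abs_mul, ← mul_add]
        gcongr
        exact abs_add_le _ _
    _ ≤ q * exp (-((1 - α) * (L * t))) * N +
          1 / (|a 0| * α ^ n) * (M * N * (1 - exp (-L * t)) / L) := by
        rw [hcoef]
        gcongr
    _ = (q * exp (-((1 - α) * (L * t))) + c * (1 - exp (-L * t))) * N := by ring
    _ ≤ q * N := by gcongr; exact weightedNorm_nonneg

end Bop

theorem contraction_in_weighted_norm_general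
    (T : ℝ)
    (K : ℝ × ℝ → ℝ) (hK : Continuous K)
    (a : ℝ → ℝ)
    (α : ℝ) (hα0 : 0 < α) (hα1 : α < 1)
    (n : ℕ) (ε : ℝ) (hε : ε ∈ Set.Ioo (0 : ℝ) 1)
    (q : ℝ) (hq0 : 0 < q)
    (haq : ∀ t ∈ Set.Icc (0 : ℝ) T, |a t| * α ^ ε ≤ q * |a 0|) :
    ∃ Lstar : ℝ, 0 < Lstar ∧ ∀ L : ℝ, Lstar ≤ L →
      ∀ v : ℝ → ℝ, ContinuousOn v (Set.Icc (0 : ℝ) T) →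
        weightedNorm T L (Bop K a α n ε v) ≤ q * weightedNorm T L v := by
  obtain ⟨M, hM⟩ := (isCompact_Icc (a := (0 : ℝ)) (b := T)).prod isCompact_Icc
    |>.exists_bound_of_continuousOn hK.continuousOn
  set C := M / (|a 0| * α ^ n)
  have hβ : 0 < q * (1 - α) := mul_pos hq0 (sub_pos.2 hα1)
  refine ⟨max 1 (C / (q * (1 - α))), lt_max_of_lt_left one_pos, fun L hL v hv => ?_⟩
  have hL0 : 0 < L := one_pos.trans_le ((le_max_left _ _).trans hL)
  have hLC : C ≤ L * (q * (1 - α)) := (div_le_iff₀ hβ).1 ((le_max_right _ _).trans hL)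
  refine weightedNorm_le (fun t ht => ?_) (mul_nonneg hq0.le weightedNorm_nonneg)
  exact exp_neg_mul_abs_Bop_le (fun x hx => (norm_eq_abs _).symm.trans_le (hM x hx)) hα0.le
    hα1.le hε.1.le hq0.le haq hL0 hLC hv ht

/-- There exists `L* > 0` such that for all `L ≥ L*` the operator `B` is a
`q`-contraction with respect to the weighted norm `‖·‖_L`: `‖B v‖_L ≤ q ‖v‖_L`. -/
theorem contraction_in_weighted_norm
    (T : ℝ) (hT : 0 < T)
    (K : ℝ × ℝ → ℝ) (hK : Continuous K)
    (a : ℝ → ℝ) (ha : Continuous a) (ha0 : a 0 ≠ 0)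
    (α : ℝ) (hα0 : 0 < α) (hα1 : α < 1)
    (n : ℕ) (ε : ℝ) (hε : ε ∈ Set.Ioo (0 : ℝ) 1)
    (q : ℝ) (hq0 : 0 < q) (hq1 : q < 1)
    (haq : ∀ t ∈ Set.Icc (0 : ℝ) T, |a t| * α ^ ε ≤ q * |a 0|) :
    ∃ Lstar : ℝ, 0 < Lstar ∧ ∀ L : ℝ, Lstar ≤ L →
      ∀ v : ℝ → ℝ, ContinuousOn v (Set.Icc (0 : ℝ) T) →
        weightedNorm T L (Bop K a α n ε v) ≤ q * weightedNorm T L v :=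
  contraction_in_weighted_norm_general T K hK a α hα0 hα1 n ε hε q hq0 haq
end

section
/- Define sequences (b_i) and (m_i) of real numbers by: b_1 = 4/ln 2, and b_i = b_{i−1} / (i·(1 − 1/2^i)) for i ≥ 2; m_1 = (−(ln 2)·(1/2)·b_1 − 2/ln 2) / (1 − 1/2), and m_i = (−(ln 2)·(1/2^i)·b_i + m_{i−1}/i − b_{i−1}/i²) / (1 − 1/2^i) for i ≥ 2. Then both power series Σ_{i=1}^∞ b_i·t^i and Σ_{i=1}^∞ m_i·t^i converge for every real t (infinite radius of convergence). -/
/-!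
Since `1 - 2⁻ⁱ ≥ 1/2`, the recursions give `|b (n+1)| ≤ 2 |b n| / (n+1)` and
`|m (n+1)| ≤ 2 |m n| / (n+1) + O(2ⁿ⁺¹ / (n+1)!)`, the forcing term coming from the bound on `b`.
A discrete Grönwall argument turns these into `|b n| = O(2ⁿ / n!)` and `|m n| = O(4ⁿ / n!)`,
so both power series are dominated by exponential series.
-/

open Nat

lemma summable_mul_pow_of_abs_le_mul_pow_div_factorial {c : ℕ → ℝ} {K R : ℝ}
    (hc : ∀ n ≥ 1, |c n| ≤ K * R ^ n / n !) (t : ℝ) :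
    Summable fun n => c n * t ^ n := by
  refine .of_norm_bounded_eventually_nat
    ((Real.summable_pow_div_factorial (R * |t|)).mul_left K) ?_
  filter_upwards [Filter.eventually_ge_atTop 1] with n hn
  calc ‖c n * t ^ n‖ = |c n| * |t| ^ n := by rw [Real.norm_eq_abs, abs_mul, abs_pow]
    _ ≤ K * R ^ n / n ! * |t| ^ n := by gcongr; exact hc n hn
    _ = K * ((R * |t|) ^ n / n !) := by ring

lemma abs_le_mul_pow_div_factorial_of_abs_succ_le {c : ℕ → ℝ} {A E R K : ℝ}
    (hA : 0 ≤ A) (hR : 0 ≤ R) (hK : 0 ≤ K) (hEK : E ≤ K) (h₁ : |c 1| ≤ K * (A + R))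
    (hstep : ∀ n ≥ 1, |c (n + 1)| ≤ A / (n + 1) * |c n| + E * R ^ (n + 1) / (n + 1)!) :
    ∀ n ≥ 1, |c n| ≤ K * (A + R) ^ n / n ! := by
  intro n hn
  induction n, hn using Nat.le_induction with
  | base => simpa using h₁
  | succ n hn ih =>
    have hfac : ((n + 1)! : ℝ) = (n + 1) * n ! := by push_cast [Nat.factorial_succ]; ring
    have hRn : R ^ n ≤ (A + R) ^ n := by gcongr; linarith
    calc |c (n + 1)| ≤ A / (n + 1) * |c n| + E * R ^ (n + 1) / (n + 1)! := hstep n hn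
      _ ≤ A / (n + 1) * (K * (A + R) ^ n / n !) + E * R ^ (n + 1) / (n + 1)! := by gcongr
      _ = (A * K * (A + R) ^ n + E * R ^ (n + 1)) / (n + 1)! := by
          rw [hfac]; field_simp
      -- `E ≤ K` lets the extra `R` in the growth rate `A + R` absorb the forcing term
      _ ≤ (A * K * (A + R) ^ n + K * R * (A + R) ^ n) / (n + 1)! := by
          gcongr ?_ / _
          gcongr A * K * (A + R) ^ n + ?_
          calc E * R ^ (n + 1) ≤ K * R ^ (n + 1) := by gcongr
            _ = K * R * R ^ n := by ring
            _ ≤ K * R * (A + R) ^ n := by gcongr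
      _ = K * (A + R) ^ (n + 1) / (n + 1)! := by ring

lemma abs_div_one_sub_one_div_two_pow_le (x : ℝ) {i : ℕ} (hi : 1 ≤ i) :
    |x / (1 - 1 / 2 ^ i)| ≤ 2 * |x| := by
  have h : (1 : ℝ) / 2 ≤ 1 - 1 / 2 ^ i := by
    have : (2 : ℝ) ≤ 2 ^ i := by simpa using pow_le_pow_right₀ one_le_two hi
    have : 1 / 2 ^ i ≤ (1 : ℝ) / 2 := by gcongr
    linarith
  have hpos : (0 : ℝ) < 1 - 1 / 2 ^ i := by linarith
  rw [abs_div, abs_of_pos hpos, div_le_iff₀ hpos]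
  nlinarith [abs_nonneg x]

section Coefficients

variable {b m : ℕ → ℝ}

lemma abs_coeff_b_succ_le (hbrec : ∀ i : ℕ, 2 ≤ i → b i = b (i - 1) / (i * (1 - 1 / 2 ^ i)))
    {n : ℕ} (hn : 1 ≤ n) : |b (n + 1)| ≤ 2 / (n + 1) * |b n| := by
  have h := hbrec (n + 1) (by omega)
  rw [Nat.add_sub_cancel, ← div_div] at h
  push_cast at h
  rw [h]
  calc _ ≤ 2 * |b n / (n + 1)| := abs_div_one_sub_one_div_two_pow_le _ (by omega)
    _ = 2 / (n + 1) * |b n| := by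
        rw [abs_div, abs_of_pos (by positivity : (0 : ℝ) < n + 1)]; ring

lemma abs_coeff_m_succ_le
    (hmrec : ∀ i : ℕ, 2 ≤ i →
      m i = (-(Real.log 2) * (1 / 2 ^ i) * b i + m (i - 1) / i - b (i - 1) / (i : ℝ) ^ 2) /
        (1 - 1 / 2 ^ i))
    {C : ℝ} (hb : ∀ n ≥ 1, |b n| ≤ C * 2 ^ n / n !) {n : ℕ} (hn : 1 ≤ n) :
    |m (n + 1)| ≤ 2 / (n + 1) * |m n| + (2 * Real.log 2 + 1) * C * 2 ^ (n + 1) / (n + 1)! := by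
  have hC : 0 ≤ C := by simpa using (abs_nonneg _).trans (hb 1 le_rfl)
  have hlog : 0 < Real.log 2 := Real.log_pos one_lt_two
  have h := hmrec (n + 1) (by omega)
  rw [Nat.add_sub_cancel] at h
  push_cast at h
  have hfac : ((n + 1)! : ℝ) = (n + 1) * n ! := by push_cast [Nat.factorial_succ]; ring
  rw [h]
  calc _ ≤ 2 * |-Real.log 2 * (1 / 2 ^ (n + 1)) * b (n + 1) + m n / (n + 1) - b n / (n + 1) ^ 2| :=
        abs_div_one_sub_one_div_two_pow_le _ (by omega)
    _ ≤ 2 * (Real.log 2 * |b (n + 1)| / 2 ^ (n + 1) + |m n| / (n + 1) + |b n| / (n + 1) ^ 2) := by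
        gcongr
        refine (abs_sub _ _).trans ?_
        gcongr
        · refine (abs_add_le _ _).trans ?_
          rw [abs_mul, abs_mul, abs_neg, abs_of_pos hlog, abs_div, abs_div, abs_one,
            abs_of_pos (by positivity : (0 : ℝ) < 2 ^ (n + 1)),
            abs_of_pos (by positivity : (0 : ℝ) < n + 1)]
          exact le_of_eq (by ring)
        · rw [abs_div, abs_of_pos (by positivity : (0 : ℝ) < (n + 1) ^ 2)]
    _ ≤ 2 * (Real.log 2 * (C * 2 ^ (n + 1) / (n + 1)!) / 2 ^ (n + 1) + |m n| / (n + 1)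
          + C * 2 ^ n / n ! / (n + 1) ^ 2) := by
        gcongr
        · exact hb (n + 1) (by omega)
        · exact hb n hn
    _ ≤ 2 * (Real.log 2 * C / (n + 1)! + |m n| / (n + 1) + C * 2 ^ n / (n + 1)!) := by
        have hlog_term : Real.log 2 * (C * 2 ^ (n + 1) / (n + 1)!) / 2 ^ (n + 1)
            = Real.log 2 * C / (n + 1)! := by field_simp
        have hb_term : C * 2 ^ n / n ! / (n + 1) ^ 2 ≤ C * 2 ^ n / (n + 1)! := by
          rw [div_div, hfac]
          gcongr C * 2 ^ n / ?_
          nlinarith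
        rw [hlog_term]
        gcongr 2 * (_ + _ + ?_)
    _ = 2 / (n + 1) * |m n| + (2 * Real.log 2 * C + C * 2 ^ (n + 1)) / (n + 1)! := by ring
    _ ≤ _ := by
        gcongr _ + ?_ / _
        have := le_mul_of_one_le_right (by positivity : 0 ≤ Real.log 2 * C)
          (one_le_pow₀ one_le_two : (1 : ℝ) ≤ 2 ^ (n + 1))
        linarith

end Coefficients

theorem particular_solution_coefficients_summable_general
    (b m : ℕ → ℝ)
    (hbrec : ∀ i : ℕ, 2 ≤ i → b i = b (i - 1) / (i * (1 - 1 / 2 ^ i)))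
    (hmrec : ∀ i : ℕ, 2 ≤ i →
      m i = (-(Real.log 2) * (1 / 2 ^ i) * b i + m (i - 1) / i - b (i - 1) / (i : ℝ) ^ 2) /
        (1 - 1 / 2 ^ i)) :
    ∀ t : ℝ, Summable (fun i : ℕ => b (i + 1) * t ^ (i + 1)) ∧
      Summable (fun i : ℕ => m (i + 1) * t ^ (i + 1)) := by
  have hb : ∀ n ≥ 1, |b n| ≤ |b 1| * 2 ^ n / n ! := by
    simpa using abs_le_mul_pow_div_factorial_of_abs_succ_le (c := b) (A := 2) (R := 0) (E := 0)
      zero_le_two le_rfl (abs_nonneg _) (abs_nonneg _) (by linarith [abs_nonneg (b 1)])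
      (fun n hn => by simpa using abs_coeff_b_succ_le hbrec hn)
  have hE : 0 ≤ (2 * Real.log 2 + 1) * |b 1| := by positivity
  have hm : ∀ n ≥ 1, |m n| ≤ (|m 1| + (2 * Real.log 2 + 1) * |b 1|) * (2 + 2) ^ n / n ! :=
    abs_le_mul_pow_div_factorial_of_abs_succ_le zero_le_two zero_le_two (by positivity)
      (le_add_of_nonneg_left (abs_nonneg _)) (by linarith [abs_nonneg (m 1), hE])
      (fun n hn => abs_coeff_m_succ_le hmrec hb hn)
  exact fun t =>
    ⟨(summable_nat_add_iff 1).mpr (summable_mul_pow_of_abs_le_mul_pow_div_factorial hb t),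
      (summable_nat_add_iff 1).mpr (summable_mul_pow_of_abs_le_mul_pow_div_factorial hm t)⟩

/-- The coefficient sequences `(b_i)` and `(m_i)` of the particular solution
`x̂(t) = 1 + Σ m_i t^i + ln t (2/ln 2 + Σ b_i t^i)` of the inhomogeneous equation
give power series with infinite radius of convergence. -/
theorem particular_solution_coefficients_summable
    (b m : ℕ → ℝ)
    (hb1 : b 1 = 4 / Real.log 2)
    (hbrec : ∀ i : ℕ, 2 ≤ i → b i = b (i - 1) / (i * (1 - 1 / 2 ^ i)))
    (hm1 : m 1 = (-(Real.log 2) * (1 / 2) * b 1 - 2 / Real.log 2) / (1 - 1 / 2))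
    (hmrec : ∀ i : ℕ, 2 ≤ i →
      m i = (-(Real.log 2) * (1 / 2 ^ i) * b i + m (i - 1) / i - b (i - 1) / (i : ℝ) ^ 2) /
        (1 - 1 / 2 ^ i)) :
    ∀ t : ℝ, Summable (fun i : ℕ => b (i + 1) * t ^ (i + 1)) ∧
      Summable (fun i : ℕ => m (i + 1) * t ^ (i + 1)) :=
  particular_solution_coefficients_summable_general b m hbrec hmrec
end
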